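/- Fix ζ > 0, let Σ be positive semidefinite with finite trace, and let μ⋆ = μ⋆(ζ, μ) be defined implicitly by μ = μ⋆ − n/(1 + Tr(Σ(ζI + μ⋆Σ)⁻¹)). Then the derivative of μ⋆ with respect to μ satisfies 0 ≤ ∂μ⋆/∂μ ≤ 1 + Tr(Σ(ζI + μ⋆Σ)⁻¹). -/

import Mathlib

/-!
In an eigenbasis of `Σ` the trace is `T(s) = ∑ λᵢ / (ζ + s λᵢ)`, so `μ⋆` is a right inverse on
`[μ₀, ∞)` of `f(s) = s - n / (1 + T(s))`. Since `T'(s) = -∑ (λᵢ / (ζ + s λᵢ))²` and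
`s · |T'(s)| ≤ T(s)`, while the fixed-point equation at `μ₀ ≥ 0` gives `n ≤ s (1 + T(s))`, we get
`f'(s) ≥ 1 / (1 + T(s)) > 0`. The chain rule `f'(μ⋆) · ∂μ⋆/∂μ = 1`, taken one-sidedly so that it
also holds at `μ₀ = 0`, yields the bounds.
-/

open Matrix

section resolventTrace

variable {ι : Type*} [Fintype ι]

noncomputable def resolventTrace (e : ι → ℝ) (ζ s : ℝ) : ℝ :=
  ∑ i, e i / (ζ + s * e i)

noncomputable def resolventTraceSq (e : ι → ℝ) (ζ s : ℝ) : ℝ :=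
  ∑ i, (e i / (ζ + s * e i)) ^ 2

variable {e : ι → ℝ} {ζ s : ℝ}

theorem resolventTrace_nonneg (he : ∀ i, 0 ≤ e i) (hζ : 0 ≤ ζ) (hs : 0 ≤ s) :
    0 ≤ resolventTrace e ζ s :=
  Finset.sum_nonneg fun i _ => div_nonneg (he i) (add_nonneg hζ (mul_nonneg hs (he i)))

theorem resolventTraceSq_nonneg : 0 ≤ resolventTraceSq e ζ s :=
  Finset.sum_nonneg fun _ _ => sq_nonneg _

theorem mul_resolventTraceSq_le (he : ∀ i, 0 ≤ e i) (hζ : 0 ≤ ζ) (hs : 0 ≤ s) :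
    s * resolventTraceSq e ζ s ≤ resolventTrace e ζ s := by
  rw [resolventTraceSq, Finset.mul_sum]
  refine Finset.sum_le_sum fun i _ => ?_
  have hden : s * e i ≤ ζ + s * e i := le_add_of_nonneg_left hζ
  have hden_nonneg : 0 ≤ ζ + s * e i := (mul_nonneg hs (he i)).trans hden
  calc s * (e i / (ζ + s * e i)) ^ 2 = s * e i / (ζ + s * e i) * (e i / (ζ + s * e i)) := by
        ring
    _ ≤ e i / (ζ + s * e i) :=
        mul_le_of_le_one_left (div_nonneg (he i) hden_nonneg) (div_le_one_of_le₀ hden hden_nonneg)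

theorem hasDerivAt_resolventTrace (h : ∀ i, ζ + s * e i ≠ 0) :
    HasDerivAt (resolventTrace e ζ) (-resolventTraceSq e ζ s) s := by
  refine (HasDerivAt.fun_sum (u := Finset.univ) fun i _ => (hasDerivAt_const s (e i)).fun_div
    (((hasDerivAt_id' s).mul_const (e i)).const_add ζ) (h i)).congr_deriv ?_
  simp only [resolventTraceSq, ← Finset.sum_neg_distrib]
  exact Finset.sum_congr rfl fun i _ => by rw [div_pow]; ring

theorem hasDerivAt_sub_div_one_add_resolventTrace (h : ∀ i, ζ + s * e i ≠ 0)
    (h₁ : 1 + resolventTrace e ζ s ≠ 0) (c : ℝ) :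
    HasDerivAt (fun x => x - c / (1 + resolventTrace e ζ x))
      (1 - c * resolventTraceSq e ζ s / (1 + resolventTrace e ζ s) ^ 2) s :=
  ((hasDerivAt_id' s).sub ((hasDerivAt_const s c).fun_div
    ((hasDerivAt_resolventTrace h).const_add 1) h₁)).congr_deriv (by ring)

theorem one_div_one_add_resolventTrace_le (he : ∀ i, 0 ≤ e i) (hζ : 0 ≤ ζ) (hs : 0 ≤ s) {c : ℝ}
    (hc : c ≤ s * (1 + resolventTrace e ζ s)) :
    1 / (1 + resolventTrace e ζ s) ≤
      1 - c * resolventTraceSq e ζ s / (1 + resolventTrace e ζ s) ^ 2 := by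
  set T := resolventTrace e ζ s
  set S := resolventTraceSq e ζ s
  have hT : 0 ≤ T := resolventTrace_nonneg he hζ hs
  have hS : 0 ≤ S := resolventTraceSq_nonneg
  have hcS : c * S ≤ (1 + T) * T := calc
    c * S ≤ s * (1 + T) * S := mul_le_mul_of_nonneg_right hc hS
    _ = (1 + T) * (s * S) := by ring
    _ ≤ (1 + T) * T := mul_le_mul_of_nonneg_left (mul_resolventTraceSq_le he hζ hs) (by linarith)
  have hcS' : c * S / (1 + T) ^ 2 ≤ T / (1 + T) := by
    rw [div_le_div_iff₀ (by positivity) (by positivity)]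
    nlinarith
  have hsplit : 1 / (1 + T) = 1 - T / (1 + T) := by field_simp; ring
  linarith

end resolventTrace

theorem Matrix.IsHermitian.trace_mul_inv_smul_one_add_smul {n : Type*} [Fintype n]
    [DecidableEq n] {A : Matrix n n ℝ} (hA : A.IsHermitian) {ζ s : ℝ}
    (h : ∀ i, ζ + s * hA.eigenvalues i ≠ 0) :
    (A * (ζ • 1 + s • A)⁻¹).trace = resolventTrace hA.eigenvalues ζ s := by
  set e := hA.eigenvalues
  set U : Matrix n n ℝ := ↑hA.eigenvectorUnitary
  have hUU : U * star U = 1 := mem_unitaryGroup_iff.mp hA.eigenvectorUnitary.2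
  have hU : IsUnit U.det := isUnit_det_of_right_inverse hUU
  have hA' : A = U * diagonal e * U⁻¹ := by
    rw [inv_eq_right_inv hUU]; simpa using hA.spectral_theorem
  have hM : ζ • 1 + s • A = U * diagonal (fun i => ζ + s * e i) * U⁻¹ := by
    have : diagonal (fun i => ζ + s * e i) = ζ • 1 + s • diagonal e := by
      ext i j; by_cases hij : i = j <;> simp [hij]
    rw [this, hA', Matrix.mul_add, Matrix.add_mul, Matrix.mul_smul, Matrix.smul_mul,
      Matrix.mul_smul, Matrix.smul_mul, Matrix.mul_one, mul_nonsing_inv _ hU, Matrix.mul_assoc]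
  have hMinv : (diagonal fun i => ζ + s * e i)⁻¹ = diagonal fun i => (ζ + s * e i)⁻¹ :=
    inv_eq_left_inv (by simp [diagonal_mul_diagonal, inv_mul_cancel₀ (h _)])
  rw [hM, hA', mul_inv_rev, mul_inv_rev, nonsing_inv_nonsing_inv _ hU, hMinv]
  simp only [Matrix.mul_assoc, nonsing_inv_mul_cancel_left _ _ hU]
  rw [← Matrix.mul_assoc (diagonal e), diagonal_mul_diagonal, ← Matrix.mul_assoc,
    trace_conj ((isUnit_iff_isUnit_det U).mpr hU), trace_diagonal]
  rfl

theorem Matrix.PosSemidef.trace_mul_inv_smul_one_add_smul {n : Type*} [Fintype n]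
    [DecidableEq n] {A : Matrix n n ℝ} (hA : A.PosSemidef) {ζ s : ℝ} (hζ : 0 < ζ) (hs : 0 ≤ s) :
    (A * (ζ • 1 + s • A)⁻¹).trace = resolventTrace hA.1.eigenvalues ζ s :=
  hA.1.trace_mul_inv_smul_one_add_smul fun i =>
    (add_pos_of_pos_of_nonneg hζ (mul_nonneg hs (hA.eigenvalues_nonneg i))).ne'

theorem HasDerivAt.mul_eq_one_of_forall_ge_comp_eq {f g : ℝ → ℝ} {f' g' a : ℝ}
    (hf : HasDerivAt f f' (g a)) (hg : HasDerivAt g g' a) (hfg : ∀ x, a ≤ x → f (g x) = x) :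
    f' * g' = 1 :=
  (uniqueDiffWithinAt_Ici a).eq_deriv _ (hf.comp_hasDerivWithinAt a hg.hasDerivWithinAt)
    ((hasDerivWithinAt_id a _).congr_of_mem (fun x hx => hfg x hx) (Set.mem_Ici.2 le_rfl))

theorem stmt8 {d : ℕ} (Sig : Matrix (Fin d) (Fin d) ℝ) (hSig : Sig.PosSemidef)
    (n : ℕ) (ζ : ℝ) (hζ : 0 < ζ)
    (mst : ℝ → ℝ)
    (hfix : ∀ μ : ℝ, 0 ≤ μ → μ < mst μ ∧
      μ = mst μ - (n : ℝ) /
        (1 + (Sig * (ζ • (1 : Matrix (Fin d) (Fin d) ℝ) + mst μ • Sig)⁻¹).trace))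
    (μ₀ : ℝ) (hμ₀ : 0 ≤ μ₀) (D : ℝ) (hD : HasDerivAt mst D μ₀) :
    0 ≤ D ∧
      D ≤ 1 + (Sig * (ζ • (1 : Matrix (Fin d) (Fin d) ℝ) + mst μ₀ • Sig)⁻¹).trace := by
  set e := hSig.1.eigenvalues
  have he : ∀ i, 0 ≤ e i := hSig.eigenvalues_nonneg
  have hmst : ∀ μ, 0 ≤ μ → 0 ≤ mst μ := fun μ hμ => hμ.trans (hfix μ hμ).1.le
  have hinv : ∀ μ, μ₀ ≤ μ → mst μ - n / (1 + resolventTrace e ζ (mst μ)) = μ := fun μ hμ => by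
    have hμ' := hμ₀.trans hμ
    rw [← hSig.trace_mul_inv_smul_one_add_smul hζ (hmst μ hμ')]
    exact (hfix μ hμ').2.symm
  set s₁ := mst μ₀
  set T := resolventTrace e ζ s₁
  have hs₁ : 0 ≤ s₁ := hmst μ₀ hμ₀
  have hT : 0 ≤ T := resolventTrace_nonneg he hζ.le hs₁
  have hf := hasDerivAt_sub_div_one_add_resolventTrace
    (fun i => (add_pos_of_pos_of_nonneg hζ (mul_nonneg hs₁ (he i))).ne') (by positivity) (n : ℝ)
  have hf'D := hf.mul_eq_one_of_forall_ge_comp_eq hD hinv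
  have hn : (n : ℝ) ≤ s₁ * (1 + T) := by
    have := hinv μ₀ le_rfl
    rw [← div_le_iff₀ (by positivity)]
    linarith
  have hf' := one_div_one_add_resolventTrace_le he hζ.le hs₁ hn
  rw [hSig.trace_mul_inv_smul_one_add_smul hζ hs₁, eq_one_div_of_mul_eq_one_right hf'D]
  have hf'pos := (by positivity : 0 < 1 / (1 + T)).trans_le hf'
  exact ⟨by positivity, (one_div_le hf'pos (by positivity)).mpr hf'⟩
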